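/- arXiv:2511.00566 — 5 statements merged into one kernel-verified Lean document; each statement's English description precedes it below -/
import Mathlib

section
/- An idempotent word of FIM(X) avoids the letter x (meaning its path in the Cayley graph of FG(X) never traverses the edge from ε to x) if and only if it is derivable from the nonterminal Z_x in the grammar with nonterminals {Z_a : a ∈ X^±} and productions Z_a → Z_a Z_a, Z_a → y Z_{ȳ} ȳ for each y ∈ X^± with y ≠ a, and Z_a → ε. -/
/-- The symmetric alphabet `X^± = X ∪ X̄`, encoded as pairs (letter, sign). -/
abbrev Letter (X : Type) : Type := X × Bool

/-- Formal inverse of a letter. -/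
def linv {X : Type} (a : Letter X) : Letter X := (a.1, !a.2)

/-- `wordInv v` is `v̄`: the reverse of `v` with every letter replaced by its inverse. -/
def wordInv {X : Type} (v : List (Letter X)) : List (Letter X) := v.reverse.map linv

/-- The vertex set of the Munn tree of `w`: reductions of all prefixes of `w` in FG(X). -/
def munn {X : Type} (w : List (Letter X)) : Set (FreeGroup X) :=
  {g | ∃ p : List (Letter X), p <+: w ∧ FreeGroup.mk p = g}

/-- A word represents an idempotent of FIM(X) iff it reduces to 1 in FG(X). -/
def IsIdemWord {X : Type} (w : List (Letter X)) : Prop := FreeGroup.mk w = 1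

/-- A word is reduced iff it has no adjacent mutually inverse letters. -/
def Reduced {X : Type} (w : List (Letter X)) : Prop :=
  List.Chain' (fun a b => b ≠ linv a) w

/-- The Munn tree of `w` contains the edge from (the reduced word) `p` to `p · a`. -/
def EdgeIn {X : Type} (w : List (Letter X)) (p : List (Letter X)) (a : Letter X) : Prop :=
  Reduced (p ++ [a]) ∧ FreeGroup.mk p ∈ munn w ∧ FreeGroup.mk (p ++ [a]) ∈ munn w

/-- An idempotent word avoids `x` iff its Munn tree omits the edge `(ε, x)`. -/
def Avoids {X : Type} (w : List (Letter X)) (x : Letter X) : Prop := ¬ EdgeIn w [] x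

/-- Equality in the free inverse monoid FIM(X): equality of Munn trees. -/
def EqFIM {X : Type} (u v : List (Letter X)) : Prop :=
  FreeGroup.mk u = FreeGroup.mk v ∧ munn u = munn v

/-- The alphabet `X^± ∪ {#}`. -/
abbrev HSym (X : Type) : Type := Letter X ⊕ Unit

/-- The hashSym symbol. -/
def hashSym {X : Type} : HSym X := Sum.inr ()

/-- `encode u v = u # v̄`. -/
def encode {X : Type} (u v : List (Letter X)) : List (HSym X) :=
  u.map Sum.inl ++ hashSym :: (wordInv v).map Sum.inl


instance {T N : Type} [DecidableEq T] [DecidableEq N] : DecidableEq (ContextFreeRule T N) :=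
  fun a b => decidable_of_iff (a.input = b.input ∧ a.output = b.output)
    (by cases a; cases b; simp)

/-- Interleaving `e₁x₁e₂x₂⋯e_mx_m`. -/
def interE {X : Type} (es : List (List (Letter X))) (xs : List (Letter X)) : List (Letter X) :=
  (List.zipWith (fun e x => e ++ [x]) es xs).flatten

/-- Interleaving `y₁f₁y₂f₂⋯y_nf_n`. -/
def interF {X : Type} (ys : List (Letter X)) (fs : List (List (Letter X))) : List (Letter X) :=
  (List.zipWith (fun y f => y :: f) ys fs).flatten

/-- Derivability of a terminal word from a given nonterminal of a grammar. -/
def DerivesFrom {T : Type} (g : ContextFreeGrammar T) (n : g.NT) (w : List T) : Prop :=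
  g.Derives [Symbol.nonterminal n] (w.map Symbol.terminal)

/-- The grammar with nonterminals `Z_a` (`a ∈ X^±`), start symbol `Z_x`, and productions
`Z_a → Z_a Z_a`, `Z_a → y Z_{ȳ} ȳ` (for `y ∈ X^±`, `y ≠ a`) and `Z_a → ε`. -/
def gZ (X : Type) [Fintype X] [DecidableEq X] (x : Letter X) :
    ContextFreeGrammar (Letter X) where
  NT := Letter X
  initial := x
  rules :=
    (Finset.univ.image fun a : Letter X =>
      ⟨a, [Symbol.nonterminal a, Symbol.nonterminal a]⟩)
    ∪ (Finset.univ.image fun a : Letter X => ⟨a, []⟩)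
    ∪ (((Finset.univ ×ˢ Finset.univ).filter
          (fun p : Letter X × Letter X => p.2 ≠ p.1)).image
        fun p => ⟨p.1, [Symbol.terminal p.2, Symbol.nonterminal (linv p.2),
                        Symbol.terminal (linv p.2)]⟩)

/-!
A word of `ZLang a` is idempotent and its Munn tree misses the vertex `a`: the tree of `u v` with
`u` idempotent is the union of the trees of `u` and `v`, and the tree of `y u ȳ` is the edge
`(1, y)` together with the `y`-translate of the tree of `u`. That translate contains `a ≠ y` only
if the tree of `u` contains `ȳ a`, hence `ȳ`, since Munn trees contain the geodesics to their
vertices.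
Conversely, cut an idempotent word avoiding `a` at its first return to `1`. A piece returning
only at its end starts with some `y ≠ a` and, the Cayley graph being a tree, all of its proper
prefixes reduce to words beginning with `y`; so it ends with `ȳ`, and its middle part is
idempotent and avoids `ȳ`.
-/

open FreeGroup

section FreeGroupWords
variable {X : Type}

@[simp] lemma linv_linv (a : Letter X) : linv (linv a) = a := by
  simp [linv]

lemma mk_singleton_inv (a : Letter X) : (mk [a])⁻¹ = mk [linv a] := by
  simp [inv_mk, invRev, linv]

lemma isReduced_append_singleton {L : List (Letter X)} (hL : IsReduced L) {a : Letter X}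
    (ha : ∀ t, L ≠ t ++ [linv a]) : IsReduced (L ++ [a]) := by
  refine List.isChain_append.mpr ⟨hL, List.isChain_singleton a, fun b hb c hc hbc => ?_⟩
  obtain ⟨t, rfl⟩ := List.getLast?_eq_some_iff.mp hb
  obtain rfl : c = a := by simpa using hc.symm
  by_contra hne
  exact ha t (by congr; exact Prod.ext hbc (Bool.eq_not.mpr hne))

variable [DecidableEq X]

lemma mk_singleton_ne_one (a : Letter X) : mk [a] ≠ 1 := by
  simp [← toWord_inj]

lemma toWord_mul_mk_singleton (g : FreeGroup X) (a : Letter X) :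
    (g * mk [a]).toWord = g.toWord ++ [a] ∨ g.toWord = (g * mk [a]).toWord ++ [linv a] := by
  by_cases h : ∃ t, g.toWord = t ++ [linv a]
  · obtain ⟨t, ht⟩ := h
    have hg : g * mk [a] = mk t := by
      rw [← mk_toWord (x := g), ht, ← mul_mk, ← mk_singleton_inv, inv_mul_cancel_right]
    have ht_red : IsReduced t := isReduced_toWord.infix ⟨[], [linv a], by rw [ht]; simp⟩
    right
    rw [hg, toWord_mk, ht_red.reduce_eq, ht]
  · have hred := isReduced_append_singleton isReduced_toWord (not_exists.mp h)
    left
    rw [← hred.reduce_eq, ← toWord_mk, ← mul_mk, mk_toWord]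

lemma exists_prefix_mk_eq_of_prefix_toWord (p : List (Letter X)) {q : List (Letter X)}
    (hq : q <+: (mk p).toWord) : ∃ p', p' <+: p ∧ mk p' = mk q := by
  induction p using List.reverseRecOn generalizing q with
  | nil =>
    obtain rfl : q = [] := by simpa using hq
    exact ⟨[], List.nil_prefix, rfl⟩
  | append_singleton p a ih =>
    have extend {p'} (hp' : p' <+: p) : p' <+: p ++ [a] := hp'.trans (List.prefix_append p [a])
    rw [← mul_mk] at hq
    rcases toWord_mul_mk_singleton (mk p) a with h | h
    · rw [h] at hq
      rcases List.prefix_concat_iff.mp hq with rfl | hq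
      · exact ⟨p ++ [a], List.prefix_refl _, by rw [← h, mk_toWord, mul_mk]⟩
      · obtain ⟨p', hp', hval⟩ := ih hq
        exact ⟨p', extend hp', hval⟩
    · obtain ⟨p', hp', hval⟩ := ih (hq.trans (h ▸ List.prefix_append _ _))
      exact ⟨p', extend hp', hval⟩

end FreeGroupWords

section MunnTree
variable {X : Type}

lemma munn_append {u : List (Letter X)} (hu : mk u = 1) (v : List (Letter X)) :
    munn (u ++ v) = munn u ∪ munn v := by
  have hmk (p : List (Letter X)) : mk (u ++ p) = mk p := by rw [← mul_mk, hu, one_mul]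
  ext g
  constructor
  · rintro ⟨p, ⟨r, hr⟩, rfl⟩
    rcases List.append_eq_append_iff.mp hr with ⟨s, rfl, -⟩ | ⟨p', rfl, rfl⟩
    · exact .inl ⟨p, List.prefix_append p s, rfl⟩
    · exact .inr ⟨p', List.prefix_append p' r, (hmk p').symm⟩
  · rintro (⟨p, hp, rfl⟩ | ⟨p, hp, rfl⟩)
    · exact ⟨p, hp.trans (List.prefix_append u v), rfl⟩
    · exact ⟨u ++ p, (List.prefix_append_right_inj u).mpr hp, hmk p⟩

lemma avoids_iff_mk_singleton_notMem_munn {w : List (Letter X)} {x : Letter X} :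
    Avoids w x ↔ mk [x] ∉ munn w :=
  not_congr ⟨fun h => h.2.2, fun h => ⟨List.isChain_singleton x, ⟨[], List.nil_prefix, rfl⟩, h⟩⟩

/-- Munn trees are subtrees: they contain the geodesic from `1` to each of their vertices. -/
lemma mk_mem_munn_of_prefix_toWord [DecidableEq X] {w : List (Letter X)} {g : FreeGroup X}
    (hg : g ∈ munn w) {q : List (Letter X)} (hq : q <+: g.toWord) : mk q ∈ munn w := by
  obtain ⟨p, hp, rfl⟩ := hg
  obtain ⟨p', hp', hval⟩ := exists_prefix_mk_eq_of_prefix_toWord p hq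
  exact ⟨p', hp'.trans hp, hval⟩

end MunnTree

/-- The language of the nonterminal `Z_a` of `gZ`, one constructor per production. -/
inductive ZLang {X : Type} : Letter X → List (Letter X) → Prop
  | nil (a : Letter X) : ZLang a []
  | append {a : Letter X} {u v : List (Letter X)} : ZLang a u → ZLang a v → ZLang a (u ++ v)
  | wrap {a y : Letter X} {u : List (Letter X)} :
      y ≠ a → ZLang (linv y) u → ZLang a (y :: u ++ [linv y])

namespace ZLang
variable {X : Type} {a : Letter X} {w : List (Letter X)}

lemma mk_eq_one (h : ZLang a w) : mk w = 1 := by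
  induction h with
  | nil => rfl
  | append _ _ hu hv => rw [← mul_mk, hu, hv, one_mul]
  | @wrap a y u _ _ hu =>
    rw [← mul_mk, show y :: u = [y] ++ u from rfl, ← mul_mk, hu, mul_one, ← mk_singleton_inv,
      mul_inv_cancel]

lemma mk_singleton_notMem_munn [DecidableEq X] (h : ZLang a w) : mk [a] ∉ munn w := by
  induction h with
  | nil a =>
    rintro ⟨p, hp, hpa⟩
    rw [List.prefix_nil.mp hp] at hpa
    exact mk_singleton_ne_one a hpa.symm
  | append hu _ ihu ihv =>
    rw [munn_append hu.mk_eq_one]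
    rintro (h | h)
    exacts [ihu h, ihv h]
  | @wrap a y u hya hu ih =>
    rintro ⟨p, hp, hpa⟩
    rw [List.cons_append, List.prefix_cons_iff] at hp
    rcases hp with rfl | ⟨q, rfl, hq⟩
    · exact mk_singleton_ne_one a hpa.symm
    rcases List.prefix_concat_iff.mp hq with rfl | hq
    · exact mk_singleton_ne_one a (hpa.symm.trans (ZLang.wrap hya hu).mk_eq_one)
    -- a prefix of `u` would reach `ȳ a`, and the geodesic to `ȳ a` passes through `ȳ`
    have hq_mk : mk q = mk [linv y, a] := by
      rw [eq_inv_mul_of_mul_eq (show mk [y] * mk q = mk [a] from hpa), mk_singleton_inv, mul_mk]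
      rfl
    have hred : IsReduced [linv y, a] := by
      refine isReduced_cons_cons.mpr ⟨fun h1 => ?_, .singleton⟩
      by_contra h2
      exact hya (Prod.ext (by simpa [linv] using h1) (by simpa [linv] using h2))
    have hq_word : (mk q).toWord = [linv y, a] := by rw [hq_mk, toWord_mk, hred.reduce_eq]
    exact ih (mk_mem_munn_of_prefix_toWord ⟨q, hq, rfl⟩ (hq_word ▸ List.prefix_append _ [a]))

end ZLang

section FirstReturn
variable {X : Type} [DecidableEq X]

lemma exists_toWord_mk_cons_eq_cons (y : Letter X) {u : List (Letter X)}
    (hu : ∀ q, q <+: u → mk (y :: q) ≠ 1) : ∃ r, (mk (y :: u)).toWord = y :: r := by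
  induction u using List.reverseRecOn with
  | nil => exact ⟨[], by rw [toWord_mk, reduce_singleton]⟩
  | append_singleton u a ih =>
    obtain ⟨r, hr⟩ := ih fun q hq => hu q (hq.trans (List.prefix_append u [a]))
    have hmul : mk (y :: u ++ [a]) = mk (y :: u) * mk [a] := mul_mk.symm
    rw [← List.cons_append, hmul]
    rcases toWord_mul_mk_singleton (mk (y :: u)) a with h | h
    · exact ⟨r ++ [a], by rw [h, hr, List.cons_append]⟩
    · rcases hne : (mk (y :: u) * mk [a]).toWord with _ | ⟨b, r'⟩
      · exact absurd (toWord_eq_nil_iff.mp hne) (hmul ▸ hu _ (List.prefix_refl _))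
      · rw [hr, hne, List.cons_append, List.cons_eq_cons] at h
        exact ⟨r', by rw [h.1]⟩

lemma eq_linv_and_mk_eq_one_of_forall_prefix {y z : Letter X} {u : List (Letter X)}
    (h : mk (y :: u ++ [z]) = 1) (hu : ∀ q, q <+: u → mk (y :: q) ≠ 1) :
    z = linv y ∧ mk u = 1 := by
  have hyu : mk (y :: u) = mk [linv z] := by
    rw [← mk_singleton_inv]
    exact eq_inv_of_mul_eq_one_left (mul_mk.trans h)
  obtain ⟨r, hr⟩ := exists_toWord_mk_cons_eq_cons y hu
  rw [hyu, toWord_mk, reduce_singleton] at hr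
  obtain rfl : z = linv y := by rw [← (List.cons_eq_cons.mp hr).1, linv_linv]
  refine ⟨rfl, (mul_eq_left (a := mk [y])).mp ?_⟩
  rw [linv_linv] at hyu
  exact (show mk [y] * mk u = mk (y :: u) from mul_mk).trans hyu

lemma ZLang.of_mk_singleton_notMem_munn {a : Letter X} {w : List (Letter X)} (hw : mk w = 1)
    (ha : mk [a] ∉ munn w) : ZLang a w := by
  by_cases hsplit : ∃ u v, w = u ++ v ∧ u ≠ [] ∧ v ≠ [] ∧ mk u = 1
  · obtain ⟨u, v, rfl, hu, hv, hu1⟩ := hsplit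
    have hv1 : mk v = 1 := by rwa [← mul_mk, hu1, one_mul] at hw
    rw [munn_append hu1] at ha
    exact .append (of_mk_singleton_notMem_munn hu1 (ha <| .inl ·))
      (of_mk_singleton_notMem_munn hv1 (ha <| .inr ·))
  rcases eq_or_ne w [] with rfl | hne
  · exact .nil a
  obtain ⟨y, t, rfl⟩ := List.exists_cons_of_ne_nil hne
  obtain ⟨u, z, rfl⟩ := (List.eq_nil_or_concat' t).resolve_left fun ht =>
    mk_singleton_ne_one y (ht ▸ hw)
  have hprim : ∀ q, q <+: u → mk (y :: q) ≠ 1 := by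
    rintro q ⟨r, rfl⟩ hq
    exact hsplit ⟨y :: q, r ++ [z], by simp, by simp, by simp, hq⟩
  obtain ⟨rfl, hu1⟩ := eq_linv_and_mk_eq_one_of_forall_prefix hw hprim
  have hya : y ≠ a := by
    rintro rfl
    exact ha ⟨[y], by simp, rfl⟩
  have hu : mk [linv y] ∉ munn u := by
    rintro ⟨q, hq, hq_mk⟩
    refine hprim q hq ?_
    rw [← List.singleton_append, ← mul_mk, hq_mk, ← mk_singleton_inv, mul_inv_cancel]
  exact .wrap hya (of_mk_singleton_notMem_munn hu1 hu)
termination_by w.length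
decreasing_by
  all_goals simp_all [List.length_pos_iff]

end FirstReturn

section Grammar
variable {X : Type} [Fintype X] [DecidableEq X] {x : Letter X}

lemma mem_gZ_rules {r : ContextFreeRule (Letter X) (Letter X)} :
    r ∈ (gZ X x).rules ↔ (∃ a, r = ⟨a, [.nonterminal a, .nonterminal a]⟩) ∨ (∃ a, r = ⟨a, []⟩) ∨
      ∃ a y, y ≠ a ∧ r = ⟨a, [.terminal y, .nonterminal (linv y), .terminal (linv y)]⟩ := by
  change r ∈ (_ : Finset (ContextFreeRule (Letter X) (Letter X))) ↔ _
  simp only [gZ, Finset.mem_union, Finset.mem_image, Finset.mem_filter, Finset.mem_product,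
    Finset.mem_univ, true_and, or_assoc, eq_comm (b := r)]
  exact or_congr_right <| or_congr_right
    ⟨fun ⟨p, h⟩ => ⟨p.1, p.2, h⟩, fun ⟨a, y, h⟩ => ⟨(a, y), h⟩⟩

lemma produces_of_mem_gZ_rules {a : Letter X} {out : List (Symbol (Letter X) (Letter X))}
    (hr : ⟨a, out⟩ ∈ (gZ X x).rules) : (gZ X x).Produces [.nonterminal a] out :=
  ⟨_, hr, ContextFreeRule.Rewrites.input_output⟩

lemma ZLang.derives {a : Letter X} {w : List (Letter X)} (h : ZLang a w) :
    (gZ X x).Derives [.nonterminal a] (w.map .terminal) := by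
  induction h with
  | nil a => exact (produces_of_mem_gZ_rules (mem_gZ_rules.mpr (.inr (.inl ⟨a, rfl⟩)))).single
  | @append a u v _ _ hu hv =>
    rw [List.map_append]
    exact (produces_of_mem_gZ_rules (mem_gZ_rules.mpr (.inl ⟨a, rfl⟩))).trans_derives
      ((hu.append_right [.nonterminal a]).trans (hv.append_left _))
  | @wrap a y u hya _ hu =>
    rw [List.map_append, List.map_cons]
    exact (produces_of_mem_gZ_rules
        (mem_gZ_rules.mpr (.inr (.inr ⟨a, y, hya, rfl⟩)))).trans_derives
      ((hu.append_left [.terminal y]).append_right [.terminal (linv y)])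

end Grammar

inductive Yields {X : Type} : List (Symbol (Letter X) (Letter X)) → List (Letter X) → Prop
  | nil : Yields [] []
  | terminal {t : Letter X} {s w} : Yields s w → Yields (.terminal t :: s) (t :: w)
  | nonterminal {a : Letter X} {s u w} :
      ZLang a u → Yields s w → Yields (.nonterminal a :: s) (u ++ w)

namespace Yields
variable {X : Type}

lemma map_terminal (w : List (Letter X)) : Yields (w.map .terminal) w := by
  induction w with
  | nil => exact .nil
  | cons t w ih => exact .terminal ih

lemma singleton {a : Letter X} {u : List (Letter X)} (h : ZLang a u) :
    Yields [.nonterminal a] u := by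
  simpa using Yields.nonterminal h .nil

lemma append {s₁ s₂ : List (Symbol (Letter X) (Letter X))} {w₁ w₂ : List (Letter X)}
    (h₁ : Yields s₁ w₁) (h₂ : Yields s₂ w₂) : Yields (s₁ ++ s₂) (w₁ ++ w₂) := by
  induction h₁ with
  | nil => exact h₂
  | terminal _ ih => exact .terminal ih
  | nonterminal hu _ ih => rw [List.append_assoc]; exact .nonterminal hu ih

lemma exists_of_append {s₁ s₂ : List (Symbol (Letter X) (Letter X))} {w : List (Letter X)}
    (h : Yields (s₁ ++ s₂) w) : ∃ w₁ w₂, w = w₁ ++ w₂ ∧ Yields s₁ w₁ ∧ Yields s₂ w₂ := by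
  induction s₁ generalizing w with
  | nil => exact ⟨[], w, rfl, .nil, h⟩
  | cons sym s₁ ih =>
    cases h with
    | terminal h =>
      obtain ⟨w₁, w₂, rfl, h₁, h₂⟩ := ih h
      exact ⟨_ :: w₁, w₂, rfl, .terminal h₁, h₂⟩
    | nonterminal hu h =>
      obtain ⟨w₁, w₂, rfl, h₁, h₂⟩ := ih h
      exact ⟨_ ++ w₁, w₂, (List.append_assoc _ _ _).symm, .nonterminal hu h₁, h₂⟩

variable [Fintype X] [DecidableEq X] {x : Letter X}

lemma zLang_of_mem_gZ_rules {a : Letter X} {out : List (Symbol (Letter X) (Letter X))}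
    {w : List (Letter X)} (hr : ⟨a, out⟩ ∈ (gZ X x).rules) (h : Yields out w) : ZLang a w := by
  rcases mem_gZ_rules.mp hr with ⟨a, ⟨⟩⟩ | ⟨a, ⟨⟩⟩ | ⟨a, y, hya, ⟨⟩⟩
  · rcases h with _ | _ | ⟨hu, _ | _ | ⟨hv, ⟨⟩⟩⟩
    simpa using hu.append hv
  · rcases h with ⟨⟩
    exact .nil a
  · rcases h with _ | ⟨_ | _ | ⟨hu, _ | ⟨⟨⟩⟩⟩⟩
    simpa using hu.wrap hya

lemma of_produces {s t : List (Symbol (Letter X) (Letter X))} {w : List (Letter X)}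
    (hst : (gZ X x).Produces s t) (h : Yields t w) : Yields s w := by
  obtain ⟨⟨a, out⟩, hr, hrw⟩ := hst
  obtain ⟨p, q, rfl, rfl⟩ := hrw.exists_parts
  obtain ⟨w', wq, rfl, h', hq⟩ := exists_of_append h
  obtain ⟨wp, wo, rfl, hp, ho⟩ := exists_of_append h'
  exact (hp.append (singleton (zLang_of_mem_gZ_rules hr ho))).append hq

lemma of_derives {s : List (Symbol (Letter X) (Letter X))} {w : List (Letter X)}
    (h : (gZ X x).Derives s (w.map .terminal)) : Yields s w := by
  induction h using Relation.ReflTransGen.head_induction_on with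
  | refl => exact map_terminal w
  | head hst _ ih => exact of_produces hst ih

end Yields

lemma ZLang.of_derives {X : Type} [Fintype X] [DecidableEq X] {x a : Letter X}
    {w : List (Letter X)} (h : (gZ X x).Derives [.nonterminal a] (w.map .terminal)) :
    ZLang a w := by
  rcases Yields.of_derives h with _ | _ | ⟨hw, ⟨⟩⟩
  simpa using hw

/-- An idempotent word avoids `x` iff it is derivable from `Z_x`. -/
theorem avoids_iff_gZ_derivable {X : Type} [Fintype X] [DecidableEq X]
    (x : Letter X) (w : List (Letter X)) (hw : IsIdemWord w) :
    Avoids w x ↔ w ∈ (gZ X x).language := by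
  rw [ContextFreeGrammar.mem_language_iff, avoids_iff_mk_singleton_notMem_munn]
  exact ⟨fun h => (ZLang.of_mk_singleton_notMem_munn hw h).derives,
    fun h => (ZLang.of_derives h).mk_singleton_notMem_munn⟩
end

section
/- The language of all words over X^± that reduce to the identity in the free group FG(X) is context-free. -/
/-
Words over `X^±` trivial in `FG(X)` are generated by the grammar `S → ε | S S | a S ā`.
Every rule preserves the value of a sentential form in `FG(X)` (nonterminals counting
as `1`), which gives soundness. Conversely, if `a s` reduces to the empty word then `s`
reduces to the single letter `ā`; the cancellations never cross the surviving letter, so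
`s = s₁ ā s₂` with `s₁` and `s₂` both reducing to the empty word, and `a s₁ ā s₂` is derived
by induction on length via `S → S S → a S ā S`.
-/

namespace ContextFreeGrammar

variable {T : Type} {g : ContextFreeGrammar T}

lemma produces_of_mem_rules {r : ContextFreeRule T g.NT} (hr : r ∈ g.rules) :
    g.Produces [.nonterminal r.input] r.output :=
  ⟨r, hr, ContextFreeRule.Rewrites.input_output⟩

lemma Derives.append {u₁ v₁ u₂ v₂ : List (Symbol T g.NT)} (h₁ : g.Derives u₁ v₁)
    (h₂ : g.Derives u₂ v₂) : g.Derives (u₁ ++ u₂) (v₁ ++ v₂) :=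
  (h₁.append_right u₂).trans (h₂.append_left v₁)

lemma Derives.prod_map_eq {M : Type*} [Monoid M] (f : Symbol T g.NT → M)
    (hf : ∀ r ∈ g.rules, (r.output.map f).prod = f (.nonterminal r.input))
    {u v : List (Symbol T g.NT)} (h : g.Derives u v) : (v.map f).prod = (u.map f).prod := by
  induction h with
  | refl => rfl
  | tail _ hp ih =>
    obtain ⟨r, hr, hrw⟩ := hp
    obtain ⟨p, q, rfl, rfl⟩ := hrw.exists_parts
    simpa [List.prod_append, hf r hr] using ih

end ContextFreeGrammar

namespace FreeGroup

variable {α : Type*} {L : List (α × Bool)}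

lemma mk_eq_one_iff_red_nil : mk L = 1 ↔ Red L [] := by
  rw [one_eq_mk, Red.exact]
  refine ⟨fun ⟨c, h, hc⟩ => ?_, fun h => ⟨[], h, Red.refl⟩⟩
  rwa [Red.nil_iff.1 hc] at h

lemma mk_eq_prod_map_mk_singleton (L : List (α × Bool)) :
    mk L = (L.map fun a => mk [a]).prod := by
  induction L with
  | nil => rfl
  | cons a L ih => rw [List.map_cons, List.prod_cons, ← ih, mul_mk, List.singleton_append]

lemma Red.exists_eq_append_cons_of_red_singleton {a : α × Bool} (h : Red L [a]) :
    ∃ L₁ L₂, L = L₁ ++ a :: L₂ ∧ Red L₁ [] ∧ Red L₂ [] := by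
  induction h using Relation.ReflTransGen.head_induction_on with
  | refl => exact ⟨[], [], rfl, Red.refl, Red.refl⟩
  | head step _ ih =>
    obtain ⟨L₁, L₂, hL, h₁, h₂⟩ := ih
    obtain @⟨M₁, M₂, x, b⟩ := step
    rcases List.append_eq_append_iff.1 hL with ⟨c, rfl, rfl⟩ | ⟨c, rfl, hc⟩
    · exact ⟨M₁ ++ (x, b) :: (x, !b) :: c, L₂, by simp, Red.Step.not.to_red.trans h₁, h₂⟩
    rcases List.cons_eq_append_iff.1 hc with ⟨rfl, rfl⟩ | ⟨c, rfl, rfl⟩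
    · exact ⟨L₁ ++ [(x, b), (x, !b)], L₂, by simp,
        h₁.append_append Red.Step.cons_not.to_red, h₂⟩
    · exact ⟨L₁, c ++ (x, b) :: (x, !b) :: M₂, by simp, h₁, Red.Step.not.to_red.trans h₂⟩

end FreeGroup

open FreeGroup ContextFreeGrammar

variable {X : Type}

lemma mk_singleton_mul_mk_linv (a : Letter X) : mk [a] * mk [linv a] = 1 := by
  rw [mul_mk, mk_eq_one_iff_red_nil]
  exact Red.Step.cons_not.to_red

variable [Fintype X] [DecidableEq X]

def freeGroupRules (X : Type) [Fintype X] [DecidableEq X] :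
    Finset (ContextFreeRule (Letter X) Unit) :=
  {⟨(), []⟩, ⟨(), [.nonterminal (), .nonterminal ()]⟩} ∪
    Finset.univ.image fun a => ⟨(), [.terminal a, .nonterminal (), .terminal (linv a)]⟩

lemma mem_freeGroupRules {r : ContextFreeRule (Letter X) Unit} :
    r ∈ freeGroupRules X ↔ r = ⟨(), []⟩ ∨ r = ⟨(), [.nonterminal (), .nonterminal ()]⟩ ∨
      ∃ a, r = ⟨(), [.terminal a, .nonterminal (), .terminal (linv a)]⟩ := by
  simp only [freeGroupRules, Finset.mem_union, Finset.mem_insert, Finset.mem_singleton,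
    Finset.mem_image, Finset.mem_univ, true_and, or_assoc]
  exact or_congr_right (or_congr_right (exists_congr fun _ => eq_comm))

def freeGroupGrammar (X : Type) [Fintype X] [DecidableEq X] : ContextFreeGrammar (Letter X) :=
  ⟨Unit, (), freeGroupRules X⟩

def symbolValue : Symbol (Letter X) (freeGroupGrammar X).NT → FreeGroup X
  | .terminal a => mk [a]
  | .nonterminal _ => 1

lemma mk_eq_one_of_derives {w : List (Letter X)}
    (h : (freeGroupGrammar X).Derives [.nonterminal ()] (w.map .terminal)) : mk w = 1 := by
  have hrules : ∀ r ∈ (freeGroupGrammar X).rules,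
      (r.output.map symbolValue).prod = symbolValue (.nonterminal r.input) := by
    intro r hr
    rcases mem_freeGroupRules.1 hr with rfl | rfl | ⟨a, rfl⟩
    · rfl
    · exact mul_one _
    · show mk [a] * (1 * (mk [linv a] * 1)) = 1
      simpa using mk_singleton_mul_mk_linv a
  simpa [mk_eq_prod_map_mk_singleton w, Function.comp_def, symbolValue]
    using h.prod_map_eq symbolValue hrules

lemma freeGroupGrammar_produces {r : ContextFreeRule (Letter X) Unit}
    (hr : r ∈ freeGroupRules X) : (freeGroupGrammar X).Produces [.nonterminal ()] r.output :=
  produces_of_mem_rules (g := freeGroupGrammar X) hr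

lemma derives_of_red_nil : ∀ {w : List (Letter X)}, Red w [] →
    (freeGroupGrammar X).Derives [.nonterminal ()] (w.map .terminal)
  | [], _ =>
    (freeGroupGrammar_produces (r := ⟨(), []⟩) (mem_freeGroupRules.2 (.inl rfl))).single
  | (x, b) :: s, h => by
    obtain ⟨s₁, s₂, hs, h₁, h₂⟩ :=
      Red.exists_eq_append_cons_of_red_singleton (Red.cons_nil_iff_singleton.1 h)
    have split := freeGroupGrammar_produces (X := X) (mem_freeGroupRules.2 (.inr (.inl rfl)))
    have wrap :=
      freeGroupGrammar_produces (X := X) (mem_freeGroupRules.2 (.inr (.inr ⟨(x, b), rfl⟩)))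
    have fill : (freeGroupGrammar X).Derives
        [.terminal (x, b), .nonterminal (), .terminal (linv (x, b)), .nonterminal ()]
        (((x, b) :: s).map .terminal) := by
      simpa [hs, linv] using
        ((Derives.refl [.terminal (x, b)]).append (derives_of_red_nil h₁)).append
          ((Derives.refl [.terminal (linv (x, b))]).append (derives_of_red_nil h₂))
    exact split.trans_derives ((wrap.append_right [.nonterminal ()]).trans_derives fill)
termination_by w => w.length
decreasing_by all_goals simp only [hs, List.length_cons, List.length_append]; omega

/-- The language of words over `X^±` reducing to the identity of FG(X) is context-free. -/
theorem idemWords_isContextFree (X : Type) [Fintype X] [DecidableEq X] :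
    Language.IsContextFree
      ({w : List (Letter X) | FreeGroup.mk w = 1} : Language (Letter X)) := by
  refine ⟨freeGroupGrammar X, Set.ext fun w => ⟨mk_eq_one_of_derives, fun h => ?_⟩⟩
  exact derives_of_red_nil (mk_eq_one_iff_red_nil.1 h)
end

section
/- If u and v are words over X^± representing the same element of the free group FG(X), and the reduced word w is a vertex of both Munn trees T_u, T_v, then u factors as u = e₁x₁e₂x₂⋯e_m x_m U and v factors as v = e₁'x₁e₂'x₂⋯e_m' x_m V, where w = x₁⋯x_m is the reduced spelling of w, each e_i, e_i' is an idempotent word, and U, V represent the same element of FG(X). -/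
open FreeGroup in
lemma reduce_eq_self {X : Type} [DecidableEq X] {w : List (Letter X)} (h : Reduced w) :
    FreeGroup.reduce w = w := by
  induction w with
  | nil => rfl
  | cons a t ih =>
    have ht : Reduced t := h.tail
    rw [FreeGroup.reduce.cons, ih ht]
    cases t with
    | nil => rfl
    | cons b t' =>
      have hne : b ≠ linv a := (List.isChain_cons_cons.mp h).1
      have : ¬(a.1 = b.1 ∧ a.2 = !b.2) := by
        rintro ⟨h1, h2⟩
        exact hne (Prod.ext h1.symm (by simp [linv, h2]))
      simp [this]

lemma reduced_ne_one {X : Type} {w : List (Letter X)} (h : Reduced w) (hne : w ≠ []) :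
    FreeGroup.mk w ≠ 1 := by
  classical
  intro h1
  have : (FreeGroup.mk w).toWord = [] := by rw [h1]; exact FreeGroup.toWord_one
  rw [FreeGroup.toWord_mk, reduce_eq_self h] at this
  exact hne this

lemma mk_cons {X : Type} (a : Letter X) (t : List (Letter X)) :
    FreeGroup.mk (a :: t) = FreeGroup.mk [a] * FreeGroup.mk t := by
  rw [FreeGroup.mul_mk]; rfl

lemma mk_single_inv {X : Type} (a : Letter X) :
    (FreeGroup.mk [a])⁻¹ = FreeGroup.mk [linv a] := by
  rw [FreeGroup.inv_mk]; rfl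

/-- Key splitting lemma. -/
lemma split_lemma {X : Type} : ∀ n (p : List (Letter X)), p.length ≤ n →
    ∀ x ws', Reduced (x :: ws') → FreeGroup.mk p = FreeGroup.mk (x :: ws') →
    ∃ e p', p = e ++ x :: p' ∧ IsIdemWord e ∧ FreeGroup.mk p' = FreeGroup.mk ws' := by
  intro n
  induction n with
  | zero =>
    intro p hp x ws' hred hmk
    have : p = [] := List.length_eq_zero_iff.mp (Nat.le_zero.mp hp)
    subst this
    exact absurd hmk.symm (reduced_ne_one hred (by simp))
  | succ n ih =>
    intro p hp x ws' hred hmk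
    cases p with
    | nil => exact absurd hmk.symm (reduced_ne_one hred (by simp))
    | cons a rest =>
      by_cases hax : a = x
      · subst hax
        refine ⟨[], rest, rfl, rfl, ?_⟩
        have := hmk
        rw [mk_cons, mk_cons] at this
        exact mul_left_cancel this
      · -- reduced form is linv a :: x :: ws'
        have hrest : FreeGroup.mk rest = FreeGroup.mk (linv a :: x :: ws') := by
          rw [mk_cons (linv a), ← mk_single_inv]
          rw [mk_cons] at hmk
          rw [← hmk, ← mul_assoc, inv_mul_cancel, one_mul]
        have hred2 : Reduced (linv a :: x :: ws') := by
          refine List.isChain_cons_cons.mpr ⟨?_, hred⟩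
          intro hx
          exact hax (by simpa [linv] using hx.symm)
        obtain ⟨e₀, p₀, hsplit, he₀, hp₀⟩ :=
          ih rest (by simp at hp; omega) (linv a) (x :: ws') hred2 hrest
        have hlen : p₀.length ≤ n := by
          have h1 := congrArg List.length hsplit
          simp at h1 hp
          omega
        obtain ⟨e₁, p₁, hsplit1, he₁, hp₁⟩ := ih p₀ (by omega) x ws' hred hp₀
        refine ⟨a :: e₀ ++ linv a :: e₁, p₁, ?_, ?_, hp₁⟩
        · simp [hsplit, hsplit1]
        · show FreeGroup.mk _ = 1
          have : (a :: e₀ ++ linv a :: e₁ : List (Letter X))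
              = [a] ++ e₀ ++ [linv a] ++ e₁ := by simp
          rw [this, ← FreeGroup.mul_mk, ← FreeGroup.mul_mk, ← FreeGroup.mul_mk,
            he₀, he₁, mul_one, mul_one, ← mk_single_inv, mul_inv_cancel]

lemma factor_one_side {X : Type} : ∀ (ws : List (Letter X)), Reduced ws →
    ∀ u : List (Letter X), (∃ p, p <+: u ∧ FreeGroup.mk p = FreeGroup.mk ws) →
    ∃ es U, es.length = ws.length ∧ (∀ e ∈ es, IsIdemWord e) ∧ u = interE es ws ++ U := by
  intro ws
  induction ws with
  | nil => intro _ u _; exact ⟨[], u, rfl, by simp, by simp [interE]⟩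
  | cons x ws' ih =>
    intro hred u ⟨p, ⟨rest, hrest⟩, hmk⟩
    obtain ⟨e, p', hsplit, he, hp'⟩ := split_lemma p.length p le_rfl x ws' hred hmk
    obtain ⟨es', U, hlen, hidem, heq⟩ := ih hred.tail (p' ++ rest)
      ⟨p', ⟨rest, rfl⟩, hp'⟩
    refine ⟨e :: es', U, by simp [hlen], ?_, ?_⟩
    · intro f hf
      rcases List.mem_cons.mp hf with h | h
      · subst h; exact he
      · exact hidem f h
    · have : interE (e :: es') (x :: ws') = (e ++ [x]) ++ interE es' ws' := by
        simp [interE]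
      rw [this, ← hrest, hsplit]
      simp only [List.append_assoc, List.cons_append, List.singleton_append]
      rw [heq]; simp

lemma mk_interE {X : Type} : ∀ (es : List (List (Letter X))) (ws : List (Letter X)),
    es.length = ws.length → (∀ e ∈ es, IsIdemWord e) →
    FreeGroup.mk (interE es ws) = FreeGroup.mk ws := by
  intro es
  induction es with
  | nil => intro ws h _; rw [List.length_nil] at h
           rw [List.length_eq_zero_iff.mp h.symm]; rfl
  | cons e es ih =>
    intro ws h hidem
    cases ws with
    | nil => simp at h
    | cons x ws' =>
      have : interE (e :: es) (x :: ws') = (e ++ [x]) ++ interE es ws' := by simp [interE]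
      have h1 : FreeGroup.mk (e ++ [x] ++ interE es ws')
          = FreeGroup.mk e * FreeGroup.mk [x] * FreeGroup.mk (interE es ws') := by
        rw [FreeGroup.mul_mk, FreeGroup.mul_mk]
      rw [this, h1, hidem e (by simp), one_mul,
        ih ws' (by simpa using h) (fun f hf => hidem f (by simp [hf])), ← mk_cons]

/-- If `u, v` reduce to the same element of FG(X) and the reduced word `w` is a vertex of
both Munn trees, then `u = e₁x₁⋯e_mx_m U` and `v = e₁'x₁⋯e_m'x_m V` with all `eᵢ, eᵢ'`
idempotent words and `U =_{FG(X)} V`. -/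
theorem factor_along_common_vertex {X : Type} [Fintype X]
    (u v ws : List (Letter X))
    (huv : FreeGroup.mk u = FreeGroup.mk v)
    (hred : Reduced ws)
    (hwu : FreeGroup.mk ws ∈ munn u) (hwv : FreeGroup.mk ws ∈ munn v) :
    ∃ (es es' : List (List (Letter X))) (U V : List (Letter X)),
      es.length = ws.length ∧ es'.length = ws.length ∧
      (∀ e ∈ es, IsIdemWord e) ∧ (∀ e ∈ es', IsIdemWord e) ∧
      u = interE es ws ++ U ∧ v = interE es' ws ++ V ∧
      FreeGroup.mk U = FreeGroup.mk V := by
  obtain ⟨es, U, hlenU, hiU, hU⟩ := factor_one_side ws hred u hwu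
  obtain ⟨es', V, hlenV, hiV, hV⟩ := factor_one_side ws hred v hwv
  refine ⟨es, es', U, V, hlenU, hlenV, hiU, hiV, hU, hV, ?_⟩
  have h1 : FreeGroup.mk u = FreeGroup.mk ws * FreeGroup.mk U := by
    rw [hU, ← FreeGroup.mul_mk, mk_interE es ws hlenU hiU]
  have h2 : FreeGroup.mk v = FreeGroup.mk ws * FreeGroup.mk V := by
    rw [hV, ← FreeGroup.mul_mk, mk_interE es' ws hlenV hiV]
  exact mul_left_cancel (h1 ▸ h2 ▸ huv)
end

section
/- If v is a word over X^± whose Munn tree T_v contains the reduced word w but does not contain the edge from w to wx (for x ∈ X^± with wx reduced), then v factors as v = e₁'x₁⋯e_m'x_m · q · y₁f₁'⋯y_nf_n', where w = x₁⋯x_m reduced, each e_i' is an idempotent word avoiding x_i, the word q is an idempotent word avoiding x, y₁⋯y_n is the reduced form of w⁻¹·(reduction of v) with y₁ ≠ x, and each f_i' is an idempotent word avoiding ȳ_i. -/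
/-!
The prefixes of `v` trace a walk in the Cayley graph of `FG(X)`, one edge per letter. Because this
graph is a tree, a walk can only reach a vertex after passing through every vertex of the geodesic
leading to it. Cutting `v` at the first visit of each vertex `x₁⋯xᵢ` of the geodesic to `w` gives
the factors `eᵢ'xᵢ`: the walk `eᵢ'` returns to its start without stepping onto `xᵢ`. Cutting the
rest of `v` at the last visit of `w` and of each vertex `wy₁⋯yⱼ` of the geodesic to the endpoint
gives the factors `q` and `yⱼfⱼ'`: after its last visit to `wy₁⋯yⱼ₋₁` the walk never steps back,
so `fⱼ'` avoids `ȳⱼ`. Since the edge `(w, wx)` is never traversed, `q` avoids `x` and `y₁ ≠ x`.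
-/

theorem List.exists_minimal_prefix {α : Type*} {P : List α → Prop} {v : List α}
    (h : ∃ p, p <+: v ∧ P p) : ∃ r, r <+: v ∧ P r ∧ ∀ p, p <+: r → P p → p = r := by
  induction v using List.reverseRecOn with
  | nil =>
    obtain ⟨p, hp, hP⟩ := h
    rw [List.prefix_nil.mp hp] at hP
    exact ⟨[], List.nil_prefix, hP, fun p hp _ => List.prefix_nil.mp hp⟩
  | append_singleton v c ih =>
    by_cases hv : ∃ p, p <+: v ∧ P p
    · obtain ⟨r, hr, hPr, hmin⟩ := ih hv
      exact ⟨r, hr.trans (List.prefix_append _ _), hPr, hmin⟩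
    obtain ⟨p, hp, hP⟩ := h
    rcases List.prefix_concat_iff.mp hp with rfl | hp
    · refine ⟨_, List.prefix_rfl, hP, fun p hp hPp => ?_⟩
      exact (List.prefix_concat_iff.mp hp).resolve_right fun hpv => hv ⟨p, hpv, hPp⟩
    · exact absurd ⟨p, hp, hP⟩ hv

theorem List.exists_maximal_prefix {α : Type*} {P : List α → Prop} (v : List α) (h : P []) :
    ∃ q, q <+: v ∧ P q ∧ ∀ p, q <+: p → p <+: v → P p → p = q := by
  induction v using List.reverseRecOn with
  | nil => exact ⟨[], List.nil_prefix, h, fun p _ hp _ => List.prefix_nil.mp hp⟩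
  | append_singleton v c ih =>
    by_cases hv : P (v ++ [c])
    · exact ⟨_, List.prefix_rfl, hv, fun p hqp hp _ => hp.eq_of_length_le hqp.length_le⟩
    obtain ⟨q, hq, hPq, hmax⟩ := ih
    refine ⟨q, hq.trans (List.prefix_append _ _), hPq, fun p hqp hp hPp => hmax p hqp ?_ hPp⟩
    exact (List.prefix_concat_iff.mp hp).resolve_left fun hpv => hv (hpv ▸ hPp)

namespace MunnTree

open FreeGroup

variable {X : Type}

theorem reduced_iff_isReduced {w : List (Letter X)} : Reduced w ↔ IsReduced w :=
  List.IsChain.iff fun a b => by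
    obtain ⟨a₁, a₂⟩ := a
    obtain ⟨b₁, b₂⟩ := b
    cases a₂ <;> cases b₂ <;> simp [linv, eq_comm]

theorem toWord_mk_of_reduced [DecidableEq X] {w : List (Letter X)} (h : Reduced w) :
    (mk w).toWord = w := by
  rw [toWord_mk, (reduced_iff_isReduced.mp h).reduce_eq]

theorem mk_linv (a : Letter X) : mk [linv a] = (mk [a])⁻¹ := by
  rw [inv_mk]
  rfl

theorem mk_singleton_ne_one (a : Letter X) : mk [a] ≠ 1 := by
  classical
  intro h
  simpa using congrArg toWord h

theorem toWord_mul_mk_singleton [DecidableEq X] (g : FreeGroup X) (a : Letter X) :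
    (g * mk [a]).toWord = g.toWord ++ [a] ∨ (g * mk [a]).toWord <+: g.toWord := by
  by_cases h : IsReduced (g.toWord ++ [a])
  · left
    rw [← h.reduce_eq, ← toWord_mk, ← mul_mk, mk_toWord]
  right
  obtain ⟨L, b, hL⟩ : ∃ L b, g.toWord = L ++ [b] := by
    rcases List.eq_nil_or_concat' g.toWord with hg | hg
    · exact absurd (by rw [hg]; exact IsReduced.singleton) h
    · exact hg
  have hab : a = linv b := by
    have hgred : IsReduced (L ++ [b]) := hL ▸ isReduced_toWord
    rw [hL, FreeGroup.IsReduced, List.isChain_append] at h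
    obtain ⟨b₁, b₂⟩ := b
    obtain ⟨a₁, a₂⟩ := a
    simp only [List.getLast?_append, List.getLast?_singleton, Option.some_or, List.head?_cons,
      Option.mem_def, Option.some.injEq, forall_eq', List.isChain_singleton, true_and] at h
    obtain ⟨rfl, hne⟩ := Classical.not_imp.mp (not_and.mp h hgred)
    cases a₂ <;> cases b₂ <;> simp_all [linv]
  have hmk : g * mk [a] = mk L := by
    rw [← mk_toWord (x := g), hL, ← mul_mk, mul_assoc, hab, mk_linv, mul_inv_cancel, mul_one]
  have hLred : IsReduced L :=
    (hL ▸ isReduced_toWord (x := g)).infix (List.prefix_append L [b]).isInfix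
  rw [hmk, hL, toWord_mk, hLred.reduce_eq]
  exact List.prefix_append L [b]

theorem one_mem_munn (w : List (Letter X)) : (1 : FreeGroup X) ∈ munn w :=
  ⟨[], List.nil_prefix, rfl⟩

theorem mk_mem_munn_self (w : List (Letter X)) : mk w ∈ munn w :=
  ⟨w, List.prefix_rfl, rfl⟩

theorem munn_mono {u v : List (Letter X)} (h : u <+: v) : munn u ⊆ munn v :=
  fun _ ⟨p, hp, hmk⟩ => ⟨p, hp.trans h, hmk⟩

theorem mk_mul_mem_munn_append (u : List (Letter X)) {v : List (Letter X)} {g : FreeGroup X}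
    (hg : g ∈ munn v) : mk u * g ∈ munn (u ++ v) := by
  obtain ⟨p, hp, rfl⟩ := hg
  exact ⟨u ++ p, (List.prefix_append_right_inj u).mpr hp, mul_mk⟩

theorem avoids_iff_not_mem_munn {w : List (Letter X)} {a : Letter X} :
    Avoids w a ↔ mk [a] ∉ munn w :=
  not_congr ⟨fun h => h.2.2, fun h => ⟨List.isChain_singleton a, one_mem_munn w, h⟩⟩

theorem mk_mem_munn_of_prefix_toWord [DecidableEq X] (w : List (Letter X)) {p : List (Letter X)}
    (hp : p <+: (mk w).toWord) : mk p ∈ munn w := by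
  induction w using List.reverseRecOn generalizing p with
  | nil =>
    obtain rfl : p = [] := by simpa using hp
    exact one_mem_munn []
  | append_singleton w a ih =>
    have hw : munn w ⊆ munn (w ++ [a]) := munn_mono (List.prefix_append w [a])
    rw [← mul_mk] at hp
    rcases toWord_mul_mk_singleton (mk w) a with h | h
    · rw [h] at hp
      rcases List.prefix_concat_iff.mp hp with rfl | hp
      · rw [← h, mk_toWord, mul_mk]
        exact mk_mem_munn_self _
      · exact hw (ih hp)
    · exact hw (ih (hp.trans h))

theorem exists_first_visit {v : List (Letter X)} {a : Letter X} (ha : mk [a] ∈ munn v) :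
    ∃ e v', v = e ++ a :: v' ∧ IsIdemWord e ∧ mk [a] ∉ munn e ∧
      ∀ p, p <+: v → mk [a] ∈ munn p → e ++ [a] <+: p := by
  classical
  obtain ⟨r, hrv, hr, hmin⟩ := List.exists_minimal_prefix ha
  have hfirst : ∀ p, p <+: v → mk [a] ∈ munn p → r <+: p := by
    rintro p hp ⟨p', hp'p, hp'⟩
    rcases List.prefix_or_prefix_of_prefix hrv (hp'p.trans hp) with h | h
    · exact h.trans hp'p
    · exact hmin p' h hp' ▸ hp'p
  obtain ⟨e, b, rfl⟩ : ∃ e b, r = e ++ [b] :=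
    (List.eq_nil_or_concat' r).resolve_left fun h => mk_singleton_ne_one a (by rw [← hr, h]; rfl)
  have hea : mk [a] ∉ munn e := fun h => by
    simpa using (hfirst e ((List.prefix_append e [b]).trans hrv) h).length_le
  have hmke : mk e = mk [a] * (mk [b])⁻¹ := by rw [← hr, ← mul_mk, mul_inv_cancel_right]
  -- the first step onto `a` comes from `1`: any other neighbour of `a` lies beyond `a`
  obtain rfl : b = a := by
    by_contra hba
    have hred : Reduced [a, linv b] :=
      List.isChain_pair.mpr fun h => hba (by simpa [linv, Prod.ext_iff] using h)
    exact hea (mk_mem_munn_of_prefix_toWord e (by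
      rw [hmke, ← mk_linv, mul_mk, List.singleton_append, toWord_mk_of_reduced hred]
      exact ⟨[linv b], rfl⟩))
  obtain ⟨v', rfl⟩ := hrv
  refine ⟨e, v', by simp, ?_, hea, hfirst⟩
  rw [IsIdemWord, hmke, mul_inv_cancel]

theorem exists_last_visit_one {u : List (Letter X)} (hu : mk u ≠ 1) :
    ∃ q y u', u = q ++ y :: u' ∧ IsIdemWord q ∧ mk [linv y] ∉ munn u' := by
  obtain ⟨q, ⟨r, rfl⟩, hq, hmax⟩ := List.exists_maximal_prefix (P := fun p => mk p = 1) u rfl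
  obtain _ | ⟨y, u'⟩ := r
  · exact absurd (by simpa using hq) hu
  refine ⟨q, y, u', rfl, hq, ?_⟩
  rintro ⟨p, hp, hpy⟩
  have hback : mk (q ++ y :: p) = 1 := by
    rw [← List.singleton_append, ← mul_mk, ← mul_mk, hq, hpy, mk_linv, one_mul, mul_inv_cancel]
  simpa using hmax (q ++ y :: p) (List.prefix_append q _)
    ((List.prefix_append_right_inj q).mpr (List.cons_prefix_cons.mpr ⟨rfl, hp⟩)) hback

theorem mk_interE {es : List (List (Letter X))} {ws : List (Letter X)}
    (hlen : es.length = ws.length) (hes : ∀ p ∈ es.zip ws, IsIdemWord p.1) :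
    mk (interE es ws) = mk ws := by
  induction ws generalizing es with
  | nil => simp [interE]
  | cons a ws ih =>
    obtain _ | ⟨e, es⟩ := es
    · simp at hlen
    simp only [List.zip_cons_cons, List.mem_cons, forall_eq_or_imp] at hes
    simp only [interE, List.zipWith_cons_cons, List.flatten_cons] at ih ⊢
    rw [← mul_mk, ← mul_mk, ih (by simpa using hlen) hes.2, hes.1, one_mul]
    rfl

theorem exists_interE_append_of_mem_munn {ws v : List (Letter X)} (hws : Reduced ws)
    (hv : mk ws ∈ munn v) :
    ∃ es u, es.length = ws.length ∧ v = interE es ws ++ u ∧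
      ∀ p ∈ es.zip ws, IsIdemWord p.1 ∧ Avoids p.1 p.2 := by
  classical
  induction ws generalizing v with
  | nil => exact ⟨[], v, rfl, by simp [interE], by simp⟩
  | cons a ws ih =>
    obtain ⟨p₀, hp₀v, hp₀⟩ := hv
    have ha : mk [a] ∈ munn p₀ :=
      mk_mem_munn_of_prefix_toWord p₀ (by rw [hp₀, toWord_mk_of_reduced hws]; exact ⟨ws, rfl⟩)
    obtain ⟨e, v', rfl, he, hea, hfirst⟩ := exists_first_visit (munn_mono hp₀v ha)
    obtain ⟨p₁, rfl⟩ := hfirst p₀ hp₀v ha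
    have hp₁ : mk p₁ = mk ws := by
      rw [← mul_mk, ← mul_mk, he, one_mul, ← List.singleton_append, ← mul_mk] at hp₀
      exact mul_left_cancel hp₀
    obtain ⟨es, u, hlen, rfl, hes⟩ :=
      ih hws.tail ⟨p₁, by simpa using hp₀v, hp₁⟩
    refine ⟨e :: es, u, by simp [hlen], by simp [interE], ?_⟩
    rw [List.zip_cons_cons, List.forall_mem_cons]
    exact ⟨⟨he, avoids_iff_not_mem_munn.mpr hea⟩, hes⟩

theorem exists_append_interF_of_not_mem_munn {u : List (Letter X)} {x : Letter X}
    (hx : mk [x] ∉ munn u) :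
    ∃ q ys fs, fs.length = ys.length ∧ u = q ++ interF ys fs ∧
      IsIdemWord q ∧ Avoids q x ∧ Reduced ys ∧ mk ys = mk u ∧ ys.head? ≠ some x ∧
      ∀ p ∈ fs.zip ys, IsIdemWord p.1 ∧ Avoids p.1 (linv p.2) := by
  induction hn : u.length using Nat.strong_induction_on generalizing u x with
  | _ n ih =>
  by_cases hu : mk u = 1
  · exact ⟨u, [], [], rfl, by simp [interF], hu, avoids_iff_not_mem_munn.mpr hx,
      List.isChain_nil, hu.symm, by simp, by simp⟩
  obtain ⟨q, y, u', rfl, hq, hy⟩ := exists_last_visit_one hu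
  have hmky : mk (q ++ [y]) = mk [y] := by rw [← mul_mk, hq, one_mul]
  have hyx : y ≠ x := by
    rintro rfl
    exact hx (hmky ▸ ⟨q ++ [y], ⟨u', by simp⟩, rfl⟩)
  have hlen' : u'.length < n := by rw [← hn, List.length_append, List.length_cons]; omega
  obtain ⟨q', ys, fs, hlen, rfl, hq', hq'y, hys, hmkys, hhead, hfs⟩ := ih _ hlen' hy rfl
  refine ⟨q, y :: ys, q' :: fs, by simp [hlen], by simp [interF], hq, ?_, ?_, ?_, by simpa, ?_⟩
  · exact avoids_iff_not_mem_munn.mpr fun h => hx (munn_mono (List.prefix_append _ _) h)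
  · exact List.isChain_cons.mpr ⟨fun b hb hby => hhead (hby ▸ hb), hys⟩
  · calc mk (y :: ys) = mk (q ++ [y]) * mk (q' ++ interF ys fs) := by
          rw [hmky, ← hmkys, mul_mk]; rfl
      _ = mk (q ++ y :: (q' ++ interF ys fs)) := by rw [mul_mk, List.append_assoc]; rfl
  · rw [List.zip_cons_cons, List.forall_mem_cons]
    exact ⟨⟨hq', hq'y⟩, hfs⟩

end MunnTree

theorem factor_avoiding_edge_general {X : Type}
    (v ws : List (Letter X)) (x : Letter X)
    (hred : Reduced (ws ++ [x]))
    (hwv : FreeGroup.mk ws ∈ munn v)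
    (hnoedge : ¬ EdgeIn v ws x) :
    ∃ (es' : List (List (Letter X))) (q : List (Letter X))
      (ys : List (Letter X)) (fs' : List (List (Letter X))),
      es'.length = ws.length ∧ fs'.length = ys.length ∧
      v = interE es' ws ++ q ++ interF ys fs' ∧
      (∀ p ∈ es'.zip ws, IsIdemWord p.1 ∧ Avoids p.1 p.2) ∧
      IsIdemWord q ∧ Avoids q x ∧
      Reduced ys ∧ FreeGroup.mk ys = (FreeGroup.mk ws)⁻¹ * FreeGroup.mk v ∧
      ys.head? ≠ some x ∧
      (∀ p ∈ fs'.zip ys, IsIdemWord p.1 ∧ Avoids p.1 (linv p.2)) := by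
  obtain ⟨es', u, hlen, rfl, hes'⟩ :=
    MunnTree.exists_interE_append_of_mem_munn (hred.prefix (List.prefix_append ws [x])) hwv
  have hmk : FreeGroup.mk (interE es' ws) = FreeGroup.mk ws :=
    MunnTree.mk_interE hlen fun p hp => (hes' p hp).1
  have hxu : FreeGroup.mk [x] ∉ munn u := fun hx => hnoedge ⟨hred, hwv, by
    simpa only [hmk, FreeGroup.mul_mk] using MunnTree.mk_mul_mem_munn_append (interE es' ws) hx⟩
  obtain ⟨q, ys, fs', hlen', rfl, hq, hqx, hys, hmkys, hhead, hfs'⟩ :=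
    MunnTree.exists_append_interF_of_not_mem_munn hxu
  refine ⟨es', q, ys, fs', hlen, hlen', (List.append_assoc _ _ _).symm, hes', hq, hqx, hys, ?_,
    hhead, hfs'⟩
  rw [← FreeGroup.mul_mk (L₁ := interE es' ws), hmk, inv_mul_cancel_left, hmkys]

/-- If `T_v` contains the reduced word `w` but not the edge `(w, wx)`, then `v` factors as
`v = e₁'x₁⋯e_m'x_m · q · y₁f₁'⋯y_nf_n'` with each `eᵢ'` an idempotent word avoiding `xᵢ`,
`q` an idempotent word avoiding `x`, `y₁⋯y_n` the reduced form of `w⁻¹·π(v)` with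
`y₁ ≠ x`, and each `fᵢ'` an idempotent word avoiding `ȳᵢ`. -/
theorem factor_avoiding_edge {X : Type} [Fintype X]
    (v ws : List (Letter X)) (x : Letter X)
    (hred : Reduced (ws ++ [x]))
    (hwv : FreeGroup.mk ws ∈ munn v)
    (hnoedge : ¬ EdgeIn v ws x) :
    ∃ (es' : List (List (Letter X))) (q : List (Letter X))
      (ys : List (Letter X)) (fs' : List (List (Letter X))),
      es'.length = ws.length ∧ fs'.length = ys.length ∧
      v = interE es' ws ++ q ++ interF ys fs' ∧
      (∀ p ∈ es'.zip ws, IsIdemWord p.1 ∧ Avoids p.1 p.2) ∧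
      IsIdemWord q ∧ Avoids q x ∧
      Reduced ys ∧ FreeGroup.mk ys = (FreeGroup.mk ws)⁻¹ * FreeGroup.mk v ∧
      ys.head? ≠ some x ∧
      (∀ p ∈ fs'.zip ys, IsIdemWord p.1 ∧ Avoids p.1 (linv p.2)) :=
  factor_avoiding_edge_general v ws x hred hwv hnoedge
end

section
/- If u and v are words over X^± reducing to the same element of FG(X) and the Munn tree T_u contains an edge not contained in T_v, and among such edges (w, wx) is one with w of minimal length (so that w and all edges along the path labelled w lie in both T_u and T_v), then u # v̄ ∈ K_{m,n} for some m, n ≥ 0, where m = |w| and n is the length of the reduced form of w⁻¹·π(u). -/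
/-- The language `K_{m,n}` of words `u # v̄` with
`u = e₁x₁⋯e_mx_m p₀ x p₁ x̄ p₂ y₁f₁⋯y_nf_n` and `v = e₁'x₁⋯e_m'x_m q y₁f₁'⋯y_nf_n'`,
the words `x₁⋯x_m x` and `y₁⋯y_n` reduced, `y₁ ≠ x`, all lowercase factors idempotent,
`eᵢ'` avoiding `xᵢ`, `fᵢ'` avoiding `ȳᵢ`, and `q` avoiding `x`. -/
def Kmn (X : Type) (m n : ℕ) : Language (HSym X) :=
  {w | ∃ (xs : List (Letter X)) (x : Letter X) (ys : List (Letter X))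
        (es fs es' fs' : List (List (Letter X))) (p0 p1 p2 q : List (Letter X)),
      xs.length = m ∧ ys.length = n ∧
      es.length = m ∧ fs.length = n ∧ es'.length = m ∧ fs'.length = n ∧
      Reduced (xs ++ [x]) ∧ Reduced ys ∧ ys.head? ≠ some x ∧
      (∀ e ∈ es, IsIdemWord e) ∧ IsIdemWord p0 ∧ IsIdemWord p1 ∧ IsIdemWord p2 ∧
      (∀ f ∈ fs, IsIdemWord f) ∧
      (∀ p ∈ es'.zip xs, IsIdemWord p.1 ∧ Avoids p.1 p.2) ∧
      IsIdemWord q ∧ Avoids q x ∧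
      (∀ p ∈ fs'.zip ys, IsIdemWord p.1 ∧ Avoids p.1 (linv p.2)) ∧
      w = encode
        (interE es xs ++ p0 ++ x :: (p1 ++ linv x :: (p2 ++ interF ys fs)))
        (interE es' xs ++ q ++ interF ys fs')}

/-!
Removing the edge `(g, g a)` from the Cayley tree of `FG(X)` leaves a half-tree beyond it, and
the walk spelled by a word can enter that half-tree only through this edge. Cutting `u` at its
first entries into the half-trees along the geodesic `w x` gives `e₁x₁⋯e_mx_m p₀ x`: each `eᵢ`
returns to its starting vertex, so it is idempotent, and it has not yet crossed the edge, so it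
avoids `xᵢ`. The remaining walk goes from `w x` to `π(u) = w y₁⋯y_n`, along the geodesic
`x̄ y₁⋯y_n` (reduced because `y₁ ≠ x`); cutting it at its last entries gives
`p₁ x̄ p₂ y₁f₁⋯y_nf_n`, where `fᵢ` avoids `ȳᵢ` because it never leaves the half-tree again. The
same cuts of `v` give the `eᵢ'`, `q` and `fᵢ'`, and `q` avoids `x` because `w x ∉ T_v`.
Minimality of `w` puts the path to `w` into `T_v`, and `y₁ ≠ x` since otherwise the geodesic
to `π(v) = π(u)` would pass through the missing edge.
-/

namespace List

variable {α : Type*}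

theorem exists_shortest_prefix (Q : List α → Prop) :
    ∀ {r : List α}, ¬ Q [] → Q r →
      ∃ r₁ b r₂, r = r₁ ++ b :: r₂ ∧ (∀ s, s <+: r₁ → ¬ Q s) ∧ Q (r₁ ++ [b]) := by
  intro r
  induction r generalizing Q with
  | nil => exact fun h₀ h => absurd h h₀
  | cons b t ih =>
    intro h₀ hr
    by_cases hb : Q [b]
    · exact ⟨[], b, t, rfl, fun s hs => by rwa [prefix_nil.mp hs], hb⟩
    · obtain ⟨r₁, c, r₂, rfl, hpre, hc⟩ := ih (fun l => Q (b :: l)) hb hr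
      refine ⟨b :: r₁, c, r₂, rfl, fun s hs => ?_, hc⟩
      rcases prefix_cons_iff.mp hs with rfl | ⟨s', rfl, hs'⟩
      exacts [h₀, hpre s' hs']

theorem exists_longest_prefix_not (Q : List α → Prop) :
    ∀ {r : List α}, ¬ Q [] → Q r →
      ∃ r₁ b r₂, r = r₁ ++ b :: r₂ ∧ ¬ Q r₁ ∧ ∀ s, s <+: r₂ → Q (r₁ ++ b :: s) := by
  intro r
  induction r using reverseRecOn with
  | nil => exact fun h₀ h => absurd h h₀
  | append_singleton t b ih =>
    intro h₀ hr
    by_cases ht : Q t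
    · obtain ⟨r₁, c, r₂, rfl, hr₁, hpost⟩ := ih h₀ ht
      refine ⟨r₁, c, r₂ ++ [b], by simp, hr₁, fun s hs => ?_⟩
      rcases prefix_concat_iff.mp hs with rfl | hs'
      exacts [by simpa using hr, hpost s hs']
    · exact ⟨t, b, [], rfl, ht, fun s hs => by simpa [prefix_nil.mp hs] using hr⟩

end List

namespace Munn

open FreeGroup

variable {X : Type}

theorem reduced_iff_isReduced {w : List (Letter X)} : Reduced w ↔ IsReduced w := by
  refine List.IsChain.iff fun a b => ?_
  obtain ⟨a₁, a₂⟩ := a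
  obtain ⟨b₁, b₂⟩ := b
  cases a₂ <;> cases b₂ <;> simp [linv, eq_comm]

theorem mk_linv (a : Letter X) : mk [linv a] = (mk [a])⁻¹ := by
  rw [inv_mk]; rfl

theorem one_mem_munn (w : List (Letter X)) : 1 ∈ munn w := ⟨[], List.nil_prefix, rfl⟩

theorem mk_mem_munn_self (w : List (Letter X)) : mk w ∈ munn w := ⟨w, List.prefix_rfl, rfl⟩

theorem munn_mono {w w' : List (Letter X)} (h : w <+: w') : munn w ⊆ munn w' :=
  fun _ ⟨p, hp, hmk⟩ => ⟨p, hp.trans h, hmk⟩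

theorem mul_mem_munn_append {c w : List (Letter X)} {g : FreeGroup X} (h : g ∈ munn w) :
    mk c * g ∈ munn (c ++ w) := by
  obtain ⟨p, hp, rfl⟩ := h
  exact ⟨c ++ p, (List.prefix_append_right_inj c).mpr hp, mul_mk⟩

theorem avoids_iff {w : List (Letter X)} {a : Letter X} : Avoids w a ↔ mk [a] ∉ munn w := by
  simp [Avoids, EdgeIn, reduced_iff_isReduced, IsReduced.singleton, ← one_eq_mk, one_mem_munn]

theorem isReduced_pair_iff {c b : Letter X} : IsReduced [c, b] ↔ c ≠ linv b := by
  obtain ⟨c₁, c₂⟩ := c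
  obtain ⟨b₁, b₂⟩ := b
  cases c₂ <;> cases b₂ <;> simp [isReduced_cons_cons, IsReduced.singleton, linv]

theorem mk_append_cons (l l' : List (Letter X)) (a : Letter X) :
    mk (l ++ a :: l') = mk l * mk [a] * mk l' := by
  rw [mul_mk, mul_mk]; simp

theorem interE_cons (e : List (Letter X)) (es : List (List (Letter X))) (x : Letter X)
    (xs : List (Letter X)) : interE (e :: es) (x :: xs) = e ++ x :: interE es xs := by
  simp [interE]

theorem interE_append {es₁ es₂ : List (List (Letter X))} {xs₁ xs₂ : List (Letter X)}
    (h : es₁.length = xs₁.length) :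
    interE (es₁ ++ es₂) (xs₁ ++ xs₂) = interE es₁ xs₁ ++ interE es₂ xs₂ := by
  simp [interE, List.zipWith_append h]

theorem interF_cons (y : Letter X) (ys : List (Letter X)) (f : List (Letter X))
    (fs : List (List (Letter X))) : interF (y :: ys) (f :: fs) = y :: (f ++ interF ys fs) := by
  simp [interF]

theorem interF_append {ys₁ ys₂ : List (Letter X)} {fs₁ fs₂ : List (List (Letter X))}
    (h : ys₁.length = fs₁.length) :
    interF (ys₁ ++ ys₂) (fs₁ ++ fs₂) = interF ys₁ fs₁ ++ interF ys₂ fs₂ := by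
  simp [interF, List.zipWith_append h]

theorem mk_interE {es : List (List (Letter X))} {xs : List (Letter X)}
    (hlen : es.length = xs.length) (h : ∀ e ∈ es, IsIdemWord e) : mk (interE es xs) = mk xs := by
  induction es generalizing xs with
  | nil => rw [List.eq_nil_of_length_eq_zero hlen.symm]; rfl
  | cons e es ih =>
    obtain ⟨x, xs, rfl⟩ := List.exists_cons_of_length_eq_add_one hlen.symm
    rw [interE_cons, mk_append_cons, h e (by simp),
      ih (by simpa using hlen) (fun e he => h e (by simp [he])), one_mul, mul_mk,
      List.singleton_append]

variable [DecidableEq X]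

theorem toWord_mk_of_isReduced {w : List (Letter X)} (h : IsReduced w) : (mk w).toWord = w := by
  rw [toWord_mk, h.reduce_eq]

/-- The vertices of the Cayley tree of `FreeGroup X` on the far side of the edge `(g, g * a)`. -/
def halfTree (g : FreeGroup X) (a : Letter X) : Set (FreeGroup X) :=
  {h | (g⁻¹ * h).toWord.head? = some a}

theorem notMem_halfTree_self (g : FreeGroup X) (a : Letter X) : g ∉ halfTree g a := by
  simp [halfTree, inv_mul_cancel]

theorem mul_mem_halfTree {g : FreeGroup X} {a : Letter X} {l : List (Letter X)}
    (h : IsReduced (a :: l)) : g * mk (a :: l) ∈ halfTree g a := by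
  simp [halfTree, toWord_mk_of_isReduced h]

theorem one_notMem_halfTree_mk {l : List (Letter X)} {a : Letter X} (h : IsReduced (l ++ [a])) :
    1 ∉ halfTree (mk l) a := by
  rcases l.eq_nil_or_concat' with rfl | ⟨l', c, rfl⟩
  · simp [halfTree, ← one_eq_mk]
  · have hc : c.1 = a.1 → c.2 = a.2 :=
      (isReduced_cons_cons.mp (h.infix ⟨l', [], by simp⟩ : IsReduced [c, a])).1
    rw [halfTree, Set.mem_ofPred_eq, mul_one, toWord_inv,
      toWord_mk_of_isReduced (h.infix (List.prefix_append _ _).isInfix), invRev_append]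
    obtain ⟨a₁, a₂⟩ := a
    obtain ⟨c₁, c₂⟩ := c
    cases a₂ <;> cases c₂ <;> simp_all [invRev]

theorem eq_one_of_head?_toWord_mul {k : FreeGroup X} {a b : Letter X}
    (hk : k.toWord.head? ≠ some a) (hkb : (k * mk [b]).toWord.head? = some a) :
    k = 1 ∧ b = a := by
  rcases k.toWord.eq_nil_or_concat' with hnil | ⟨l, c, hl⟩
  · obtain rfl := toWord_eq_nil_iff.mp hnil
    simp_all [toWord_mk_of_isReduced IsReduced.singleton]
  have hred : IsReduced (l ++ [c]) := hl ▸ isReduced_toWord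
  have hk' : k = mk l * mk [c] := by rw [mul_mk, ← hl, mk_toWord]
  rw [hl] at hk
  by_cases hcb : c = linv b
  · have : k * mk [b] = mk l := by rw [hk', hcb, mk_linv, inv_mul_cancel_right]
    rw [this, toWord_mk_of_isReduced (hred.infix (List.prefix_append _ _).isInfix)] at hkb
    simp_all [List.head?_append]
  · have hred' : IsReduced (l ++ [c] ++ [b]) :=
      IsReduced.append_overlap hred (isReduced_pair_iff.mpr hcb) (List.cons_ne_nil _ _)
    rw [hk', mul_assoc, mul_mk, mul_mk, ← List.append_assoc, toWord_mk_of_isReduced hred'] at hkb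
    simp_all [List.head?_append]

theorem eq_of_notMem_halfTree_of_mul_mem {g h : FreeGroup X} {a b : Letter X}
    (h₁ : h ∉ halfTree g a) (h₂ : h * mk [b] ∈ halfTree g a) : h = g ∧ b = a := by
  rw [halfTree, Set.mem_ofPred_eq, ← mul_assoc] at h₂
  obtain ⟨hk, rfl⟩ := eq_one_of_head?_toWord_mul h₁ h₂
  exact ⟨(inv_mul_eq_one.mp hk).symm, rfl⟩

theorem exists_first_entry {g : FreeGroup X} {a : Letter X} {r : List (Letter X)}
    (h₁ : 1 ∉ halfTree g a) (hr : mk r ∈ halfTree g a) :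
    ∃ r₁ r₂, r = r₁ ++ a :: r₂ ∧ mk r₁ = g ∧ ∀ s, s <+: r₁ → mk s ∉ halfTree g a := by
  obtain ⟨r₁, b, r₂, rfl, hpre, hb⟩ :=
    List.exists_shortest_prefix (fun s => mk s ∈ halfTree g a) h₁ hr
  obtain ⟨hg, rfl⟩ := eq_of_notMem_halfTree_of_mul_mem (hpre r₁ List.prefix_rfl)
    (by rwa [mul_mk])
  exact ⟨r₁, r₂, rfl, hg, hpre⟩

theorem exists_last_entry {g : FreeGroup X} {a : Letter X} {r : List (Letter X)}
    (h₁ : 1 ∉ halfTree g a) (hr : mk r ∈ halfTree g a) :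
    ∃ r₁ r₂, r = r₁ ++ a :: r₂ ∧ mk r₁ = g ∧ ∀ s, s <+: r₂ → mk (r₁ ++ a :: s) ∈ halfTree g a := by
  obtain ⟨r₁, b, r₂, rfl, hr₁, hpost⟩ :=
    List.exists_longest_prefix_not (fun s => mk s ∈ halfTree g a) h₁ hr
  obtain ⟨hg, rfl⟩ := eq_of_notMem_halfTree_of_mul_mem hr₁
    (by simpa [mul_mk] using hpost [] List.nil_prefix)
  exact ⟨r₁, r₂, rfl, hg, hpost⟩

theorem exists_interE_of_mem_munn {xs r : List (Letter X)} (hxs : IsReduced xs)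
    (h : mk xs ∈ munn r) :
    ∃ es t, es.length = xs.length ∧ r = interE es xs ++ t ∧ (∀ e ∈ es, IsIdemWord e) ∧
      ∀ pr ∈ es.zip xs, Avoids pr.1 pr.2 := by
  induction xs generalizing r with
  | nil => exact ⟨[], r, rfl, by simp [interE], by simp, by simp⟩
  | cons x₀ xs ih =>
    obtain ⟨s, ⟨k, rfl⟩, hs⟩ := h
    have hx₀ : ∀ {s}, mk s = mk (x₀ :: xs) → mk s ∈ halfTree 1 x₀ := fun h => by
      rw [h, ← one_mul (mk _)]; exact mul_mem_halfTree hxs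
    obtain ⟨e, s₁, rfl, he, hpre⟩ := exists_first_entry (notMem_halfTree_self 1 x₀) (hx₀ hs)
    have hs₁ : mk s₁ = mk xs := by
      rw [mk_append_cons, he, one_mul, ← List.singleton_append, ← mul_mk] at hs
      exact mul_left_cancel hs
    obtain ⟨es, t, hlen, hsplit, hidem, havoid⟩ :=
      ih (r := s₁ ++ k) (hxs.infix (List.suffix_cons _ _).isInfix) ⟨s₁, List.prefix_append _ _, hs₁⟩
    refine ⟨e :: es, t, by simp [hlen], by simp [interE_cons, hsplit], ?_, ?_⟩
    · simpa [IsIdemWord, he] using hidem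
    · simp only [List.zip_cons_cons, List.forall_mem_cons]
      refine ⟨avoids_iff.mpr fun ⟨p, hp, hmk⟩ => hpre p hp ?_, havoid⟩
      simpa [hmk] using mul_mem_halfTree (g := 1) (l := []) IsReduced.singleton

theorem exists_interF_of_mk_eq {ys r : List (Letter X)} (hys : IsReduced ys) (h : mk r = mk ys) :
    ∃ q fs, fs.length = ys.length ∧ r = q ++ interF ys fs ∧ IsIdemWord q ∧
      (∀ f ∈ fs, IsIdemWord f) ∧ ∀ pr ∈ fs.zip ys, Avoids pr.1 (linv pr.2) := by
  induction ys using List.reverseRecOn generalizing r with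
  | nil => exact ⟨r, [], rfl, by simp [interF], h, by simp, by simp⟩
  | append_singleton ys b ih =>
    have hr : mk r ∈ halfTree (mk ys) b := by
      rw [h, ← mul_mk]; exact mul_mem_halfTree IsReduced.singleton
    obtain ⟨r₁, f, rfl, hr₁, hpost⟩ := exists_last_entry (one_notMem_halfTree_mk hys) hr
    obtain ⟨q, fs, hlen, rfl, hq, hidem, havoid⟩ :=
      ih (hys.infix (List.prefix_append _ _).isInfix) hr₁
    have hf : IsIdemWord f := by
      rw [mk_append_cons, hr₁, mul_mk] at h
      exact mul_eq_left.mp h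
    have hfb : Avoids f (linv b) := avoids_iff.mpr fun ⟨p, hp, hmk⟩ => by
      have := hpost p hp
      rw [mk_append_cons, hmk, hr₁, mk_linv, mul_inv_cancel_right] at this
      exact notMem_halfTree_self _ _ this
    refine ⟨q, fs ++ [f], by simp [hlen], by rw [interF_append hlen.symm]; simp [interF], hq,
      ?_, ?_⟩
    · simp only [List.mem_append, List.mem_singleton]
      rintro _ (hf' | rfl)
      exacts [hidem _ hf', hf]
    · rw [List.zip_append (by simp [hlen])]
      simp only [List.zip_cons_cons, List.zip_nil_left, List.mem_append, List.mem_singleton]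
      rintro _ (hpr | rfl)
      exacts [havoid _ hpr, hfb]

theorem edgeIn_of_mem_halfTree {u p : List (Letter X)} {a : Letter X} {k : FreeGroup X}
    (hpa : Reduced (p ++ [a])) (hk : k ∈ munn u) (hk' : k ∈ halfTree (mk p) a) :
    EdgeIn u p a := by
  obtain ⟨s, ⟨t, rfl⟩, rfl⟩ := hk
  obtain ⟨r₁, r₂, rfl, hr₁, -⟩ :=
    exists_first_entry (one_notMem_halfTree_mk (reduced_iff_isReduced.mp hpa)) hk'
  refine ⟨hpa, ⟨r₁, ⟨a :: r₂ ++ t, by simp⟩, hr₁⟩, ⟨r₁ ++ [a], ⟨r₂ ++ t, by simp⟩, ?_⟩⟩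
  rw [← mul_mk, hr₁, mul_mk]

theorem mk_mem_munn_of_minimal {u v ws : List (Letter X)} (hws : IsReduced ws)
    (hu : mk ws ∈ munn u)
    (hmin : ∀ p a, EdgeIn u p a → ¬ EdgeIn v p a → ws.length ≤ p.length) :
    mk ws ∈ munn v := by
  rcases ws.eq_nil_or_concat' with rfl | ⟨ws, a, rfl⟩
  · exact one_mem_munn v
  · have hu' : EdgeIn u ws a := edgeIn_of_mem_halfTree (reduced_iff_isReduced.mpr hws) hu
      (by rw [← mul_mk]; exact mul_mem_halfTree IsReduced.singleton)
    by_contra hv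
    simpa using hmin ws a hu' fun hv' => hv hv'.2.2

theorem head?_ne_of_not_edgeIn {v ws ys : List (Letter X)} {x : Letter X}
    (hred : Reduced (ws ++ [x])) (hys : IsReduced ys) (hv : mk v = mk ws * mk ys)
    (hnoedge : ¬ EdgeIn v ws x) : ys.head? ≠ some x := by
  intro hhead
  obtain ⟨ys, rfl⟩ : ∃ t, ys = x :: t := by
    obtain ⟨t, ht⟩ := List.head?_eq_some_iff.mp hhead
    exact ⟨t, ht⟩
  exact hnoedge (edgeIn_of_mem_halfTree hred (mk_mem_munn_self v) (hv ▸ mul_mem_halfTree hys))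

theorem exists_decomposition_of_edgeIn {u ws ys : List (Letter X)} {x : Letter X}
    (hred : IsReduced (ws ++ [x])) (hu : mk (ws ++ [x]) ∈ munn u) (hys : IsReduced ys)
    (hhead : ys.head? ≠ some x) (hmk : mk u = mk ws * mk ys) :
    ∃ es p0 p1 p2 fs, es.length = ws.length ∧ fs.length = ys.length ∧
      (∀ e ∈ es, IsIdemWord e) ∧ IsIdemWord p0 ∧ IsIdemWord p1 ∧ IsIdemWord p2 ∧
      (∀ f ∈ fs, IsIdemWord f) ∧
      u = interE es ws ++ p0 ++ x :: (p1 ++ linv x :: (p2 ++ interF ys fs)) := by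
  obtain ⟨es₀, t, hlen₀, rfl, hidem₀, -⟩ := exists_interE_of_mem_munn hred hu
  have ht : mk t = mk (linv x :: ys) := by
    rw [← mul_mk, mk_interE hlen₀ hidem₀, ← mul_mk, mul_assoc] at hmk
    rw [← List.singleton_append, ← mul_mk, mk_linv, eq_inv_mul_iff_mul_eq]
    exact mul_left_cancel hmk
  have hred' : IsReduced (linv x :: ys) := by
    rcases ys with _ | ⟨y, ys⟩
    · exact IsReduced.singleton
    · have hxy : IsReduced [linv x, y] := isReduced_pair_iff.mpr fun h => hhead (by
        obtain ⟨x₁, x₂⟩ := x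
        simp_all [linv])
      exact isReduced_cons_cons.mpr ⟨(isReduced_cons_cons.mp hxy).1, hys⟩
  obtain ⟨es, p0, rfl⟩ : ∃ es p0, es₀ = es ++ [p0] := by
    rcases es₀.eq_nil_or_concat' with rfl | h
    · simp at hlen₀
    · exact h
  have hlen : es.length = ws.length := by simpa using hlen₀
  obtain ⟨p1, fs₀, hlen', rfl, hp1, hidem', -⟩ := exists_interF_of_mk_eq hred' ht
  obtain ⟨p2, fs, rfl⟩ := List.exists_cons_of_length_eq_add_one hlen'
  refine ⟨es, p0, p1, p2, fs, hlen, by simpa using hlen', fun e he => hidem₀ e (by simp [he]),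
    hidem₀ p0 (by simp), hp1, hidem' p2 (by simp), fun f hf => hidem' f (by simp [hf]), ?_⟩
  rw [interE_append hlen, interF_cons]
  simp [interE]

theorem exists_decomposition_of_not_edgeIn {v ws ys : List (Letter X)} {x : Letter X}
    (hws : IsReduced ws) (hv : mk ws ∈ munn v) (hx : mk (ws ++ [x]) ∉ munn v)
    (hys : IsReduced ys) (hmk : mk v = mk ws * mk ys) :
    ∃ es' q fs', es'.length = ws.length ∧ fs'.length = ys.length ∧
      (∀ pr ∈ es'.zip ws, IsIdemWord pr.1 ∧ Avoids pr.1 pr.2) ∧ IsIdemWord q ∧ Avoids q x ∧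
      (∀ pr ∈ fs'.zip ys, IsIdemWord pr.1 ∧ Avoids pr.1 (linv pr.2)) ∧
      v = interE es' ws ++ q ++ interF ys fs' := by
  obtain ⟨es', r, hlen, rfl, hidem, havoid⟩ := exists_interE_of_mem_munn hws hv
  have hmkE : mk (interE es' ws) = mk ws := mk_interE hlen hidem
  rw [← mul_mk, hmkE] at hmk
  obtain ⟨q, fs', hlen', rfl, hq, hidem', havoid'⟩ :=
    exists_interF_of_mk_eq hys (mul_left_cancel hmk)
  refine ⟨es', q, fs', hlen, hlen', fun pr hpr => ⟨hidem _ (List.of_mem_zip hpr).1, havoid pr hpr⟩,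
    hq, avoids_iff.mpr fun hqx => hx ?_,
    fun pr hpr => ⟨hidem' _ (List.of_mem_zip hpr).1, havoid' pr hpr⟩, by simp⟩
  have := mul_mem_munn_append (c := interE es' ws) hqx
  rw [hmkE, mul_mk] at this
  exact munn_mono ⟨interF ys fs', by simp⟩ this

end Munn

open Munn FreeGroup

theorem mem_Kmn_of_minimal_missing_edge_general {X : Type} [DecidableEq X]
    (u v ws : List (Letter X)) (x : Letter X)
    (huv : FreeGroup.mk u = FreeGroup.mk v)
    (hred : Reduced (ws ++ [x]))
    (hedge : EdgeIn u ws x) (hnoedge : ¬ EdgeIn v ws x)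
    (hmin : ∀ (p : List (Letter X)) (a : Letter X),
      EdgeIn u p a → ¬ EdgeIn v p a → ws.length ≤ p.length) :
    encode u v ∈ Kmn X ws.length
      (FreeGroup.toWord ((FreeGroup.mk ws)⁻¹ * FreeGroup.mk u)).length := by
  have hred' : IsReduced (ws ++ [x]) := reduced_iff_isReduced.mp hred
  have hws : IsReduced ws := hred'.infix (List.prefix_append _ _).isInfix
  set ys := ((mk ws)⁻¹ * mk u).toWord
  have hys : IsReduced ys := isReduced_toWord
  have hu : mk u = mk ws * mk ys := by simp only [ys, mk_toWord, mul_inv_cancel_left]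
  have hv : mk v = mk ws * mk ys := huv ▸ hu
  have hw_v : mk ws ∈ munn v := mk_mem_munn_of_minimal hws hedge.2.1 hmin
  have hhead : ys.head? ≠ some x := head?_ne_of_not_edgeIn hred hys hv hnoedge
  obtain ⟨es, p0, p1, p2, fs, hlen_es, hlen_fs, hes, hp0, hp1, hp2, hfs, hu_eq⟩ :=
    exists_decomposition_of_edgeIn hred' hedge.2.2 hys hhead hu
  obtain ⟨es', q, fs', hlen_es', hlen_fs', hes', hq, hqx, hfs', hv_eq⟩ :=
    exists_decomposition_of_not_edgeIn hws hw_v (fun h => hnoedge ⟨hred, hw_v, h⟩) hys hv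
  exact ⟨ws, x, ys, es, fs, es', fs', p0, p1, p2, q, rfl, rfl, hlen_es, hlen_fs, hlen_es',
    hlen_fs', hred, reduced_iff_isReduced.mpr hys, hhead, hes, hp0, hp1, hp2, hfs, hes', hq, hqx,
    hfs', by rw [hu_eq, hv_eq]⟩

/-- If `u =_{FG(X)} v`, the edge `(w, wx)` lies in `T_u` but not in `T_v`, and among all
such edges `w` has minimal length, then `u # v̄ ∈ K_{m,n}` with `m = |w|` and `n` the
length of the reduced form of `w⁻¹·π(u)`. -/
theorem mem_Kmn_of_minimal_missing_edge {X : Type} [Fintype X] [DecidableEq X]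
    (u v ws : List (Letter X)) (x : Letter X)
    (huv : FreeGroup.mk u = FreeGroup.mk v)
    (hred : Reduced (ws ++ [x]))
    (hedge : EdgeIn u ws x) (hnoedge : ¬ EdgeIn v ws x)
    (hmin : ∀ (p : List (Letter X)) (a : Letter X),
      EdgeIn u p a → ¬ EdgeIn v p a → ws.length ≤ p.length) :
    encode u v ∈ Kmn X ws.length
      (FreeGroup.toWord ((FreeGroup.mk ws)⁻¹ * FreeGroup.mk u)).length :=
  mem_Kmn_of_minimal_missing_edge_general u v ws x huv hred hedge hnoedge hmin
end
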